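/- (Master Theorem) For every LTL formula φ in negation normal form and every infinite word w over 2^Ap: w ⊨ φ if and only if there exist X ⊆ μ(φ) and Y ⊆ ν(φ) such that (1) there exists i with w_i ⊨ (af(φ, w_{0i}))[X]_ν, (2) w ⊨ GF(ψ[Y]_μ) for every ψ ∈ X, and (3) w ⊨ FG(ψ[X]_ν) for every ψ ∈ Y. -/
import Mathlib


/-- LTL formulas in negation normal form over atomic propositions `Ap`. -/
inductive LTL (Ap : Type) : Type
  | tt : LTL Ap
  | ff : LTL Ap
  | atom (a : Ap) : LTL Ap
  | natom (a : Ap) : LTL Ap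
  | conj (φ ψ : LTL Ap) : LTL Ap
  | disj (φ ψ : LTL Ap) : LTL Ap
  | next (φ : LTL Ap) : LTL Ap
  | fut (φ : LTL Ap) : LTL Ap
  | glob (φ : LTL Ap) : LTL Ap
  | untl (φ ψ : LTL Ap) : LTL Ap
  | wUntl (φ ψ : LTL Ap) : LTL Ap
  | strongRel (φ ψ : LTL Ap) : LTL Ap
  | rel (φ ψ : LTL Ap) : LTL Ap

variable {Ap : Type} [DecidableEq Ap]

/-- The suffix `w_i` of an infinite word. -/
def suffix (w : ℕ → Finset Ap) (i : ℕ) : ℕ → Finset Ap := fun k => w (i + k)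

/-- Standard LTL satisfaction over infinite words over `2^Ap`. -/
def Sat : (ℕ → Finset Ap) → LTL Ap → Prop
  | _, .tt => True
  | _, .ff => False
  | w, .atom a => a ∈ w 0
  | w, .natom a => a ∉ w 0
  | w, .conj φ ψ => Sat w φ ∧ Sat w ψ
  | w, .disj φ ψ => Sat w φ ∨ Sat w ψ
  | w, .next φ => Sat (suffix w 1) φ
  | w, .fut φ => ∃ k, Sat (suffix w k) φ
  | w, .glob φ => ∀ k, Sat (suffix w k) φ
  | w, .untl φ ψ => ∃ k, Sat (suffix w k) ψ ∧ ∀ j < k, Sat (suffix w j) φ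
  | w, .wUntl φ ψ =>
      (∀ k, Sat (suffix w k) φ) ∨ (∃ k, Sat (suffix w k) ψ ∧ ∀ j < k, Sat (suffix w j) φ)
  | w, .strongRel φ ψ => ∃ k, Sat (suffix w k) φ ∧ ∀ j ≤ k, Sat (suffix w j) ψ
  | w, .rel φ ψ =>
      (∀ k, Sat (suffix w k) ψ) ∨ (∃ k, Sat (suffix w k) φ ∧ ∀ j ≤ k, Sat (suffix w j) ψ)

/-- The "after" function on a single letter `ν ∈ 2^Ap`. -/
def afLetter : LTL Ap → Finset Ap → LTL Ap
  | .tt, _ => .tt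
  | .ff, _ => .ff
  | .atom a, ν => if a ∈ ν then .tt else .ff
  | .natom a, ν => if a ∈ ν then .ff else .tt
  | .conj φ ψ, ν => .conj (afLetter φ ν) (afLetter ψ ν)
  | .disj φ ψ, ν => .disj (afLetter φ ν) (afLetter ψ ν)
  | .next φ, _ => φ
  | .fut φ, ν => .disj (afLetter φ ν) (.fut φ)
  | .glob φ, ν => .conj (afLetter φ ν) (.glob φ)
  | .untl φ ψ, ν => .disj (afLetter ψ ν) (.conj (afLetter φ ν) (.untl φ ψ))
  | .wUntl φ ψ, ν => .disj (afLetter ψ ν) (.conj (afLetter φ ν) (.wUntl φ ψ))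
  | .strongRel φ ψ, ν => .conj (afLetter ψ ν) (.disj (afLetter φ ν) (.strongRel φ ψ))
  | .rel φ ψ, ν => .conj (afLetter ψ ν) (.disj (afLetter φ ν) (.rel φ ψ))

/-- The "after" function extended to finite words. -/
def af : LTL Ap → List (Finset Ap) → LTL Ap
  | φ, [] => φ
  | φ, ν :: u => af (afLetter φ ν) u

/-- The finite prefix `w_{0i} = w[0]⋯w[i-1]` of an infinite word. -/
def prefixWord (w : ℕ → Finset Ap) (i : ℕ) : List (Finset Ap) :=
  (List.range i).map w

/-- The finite infix `w_{ij} = w[i]⋯w[j-1]` of an infinite word. -/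
def infixWord (w : ℕ → Finset Ap) (i j : ℕ) : List (Finset Ap) :=
  (List.range (j - i)).map (fun k => w (i + k))

/-- Evaluation of a formula as a propositional formula, where every maximal
proper subformula (root not `∧`/`∨`) is treated as a propositional variable
whose truth value is given by the assignment `v`. -/
def propEval (v : LTL Ap → Prop) : LTL Ap → Prop
  | .tt => True
  | .ff => False
  | .conj φ ψ => propEval v φ ∧ propEval v ψ
  | .disj φ ψ => propEval v φ ∨ propEval v ψ
  | φ => v φ

/-- Propositional equivalence `φ ≡_P ψ`. -/
def propEquiv (φ ψ : LTL Ap) : Prop := ∀ v, propEval v φ ↔ propEval v ψ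

/-- The set of subformulas of a formula (including itself). -/
def subf : LTL Ap → Set (LTL Ap)
  | .tt => {LTL.tt}
  | .ff => {LTL.ff}
  | .atom a => {LTL.atom a}
  | .natom a => {LTL.natom a}
  | .conj φ ψ => insert (.conj φ ψ) (subf φ ∪ subf ψ)
  | .disj φ ψ => insert (.disj φ ψ) (subf φ ∪ subf ψ)
  | .next φ => insert (.next φ) (subf φ)
  | .fut φ => insert (.fut φ) (subf φ)
  | .glob φ => insert (.glob φ) (subf φ)
  | .untl φ ψ => insert (.untl φ ψ) (subf φ ∪ subf ψ)
  | .wUntl φ ψ => insert (.wUntl φ ψ) (subf φ ∪ subf ψ)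
  | .strongRel φ ψ => insert (.strongRel φ ψ) (subf φ ∪ subf ψ)
  | .rel φ ψ => insert (.rel φ ψ) (subf φ ∪ subf ψ)

/-- A formula is proper if its root is not a conjunction or a disjunction. -/
def isProper : LTL Ap → Prop
  | .conj _ _ => False
  | .disj _ _ => False
  | _ => True

/-- The set of proper subformulas of `φ`. -/
def properSubf (φ : LTL Ap) : Set (LTL Ap) := {ψ | ψ ∈ subf φ ∧ isProper ψ}

/-- Formulas whose root is a least-fixed-point operator (`F`, `U`, `M`). -/
def isMu : LTL Ap → Prop
  | .fut _ => True
  | .untl _ _ => True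
  | .strongRel _ _ => True
  | _ => False

/-- Formulas whose root is a greatest-fixed-point operator (`G`, `W`, `R`). -/
def isNu : LTL Ap → Prop
  | .glob _ => True
  | .wUntl _ _ => True
  | .rel _ _ => True
  | _ => False

/-- `μ(φ)`: subformulas of `φ` of the form `Fψ`, `ψ₁Uψ₂`, `ψ₁Mψ₂`. -/
def muSet (φ : LTL Ap) : Set (LTL Ap) := {ψ | ψ ∈ subf φ ∧ isMu ψ}

/-- `ν(φ)`: subformulas of `φ` of the form `Gψ`, `ψ₁Wψ₂`, `ψ₁Rψ₂`. -/
def nuSet (φ : LTL Ap) : Set (LTL Ap) := {ψ | ψ ∈ subf φ ∧ isNu ψ}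

/-- `GF_w = {ψ ∈ μ(φ) | w ⊨ GFψ}`. -/
def GFSet (φ : LTL Ap) (w : ℕ → Finset Ap) : Set (LTL Ap) :=
  {ψ | ψ ∈ muSet φ ∧ Sat w (.glob (.fut ψ))}

/-- `F_w = {ψ ∈ μ(φ) | w ⊨ Fψ}`. -/
def FSet (φ : LTL Ap) (w : ℕ → Finset Ap) : Set (LTL Ap) :=
  {ψ | ψ ∈ muSet φ ∧ Sat w (.fut ψ)}

/-- `FG_w = {ψ ∈ ν(φ) | w ⊨ FGψ}`. -/
def FGSet (φ : LTL Ap) (w : ℕ → Finset Ap) : Set (LTL Ap) :=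
  {ψ | ψ ∈ nuSet φ ∧ Sat w (.fut (.glob ψ))}

/-- `G_w = {ψ ∈ ν(φ) | w ⊨ Gψ}`. -/
def GSet (φ : LTL Ap) (w : ℕ → Finset Ap) : Set (LTL Ap) :=
  {ψ | ψ ∈ nuSet φ ∧ Sat w (.glob ψ)}

open scoped Classical in
/-- `φ[X]_ν`. -/
noncomputable def evalNu (X : Set (LTL Ap)) : LTL Ap → LTL Ap
  | .tt => .tt
  | .ff => .ff
  | .atom a => .atom a
  | .natom a => .natom a
  | .conj φ ψ => .conj (evalNu X φ) (evalNu X ψ)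
  | .disj φ ψ => .disj (evalNu X φ) (evalNu X ψ)
  | .next φ => .next (evalNu X φ)
  | .glob φ => .glob (evalNu X φ)
  | .wUntl φ ψ => .wUntl (evalNu X φ) (evalNu X ψ)
  | .rel φ ψ => .rel (evalNu X φ) (evalNu X ψ)
  | .fut φ => if LTL.fut φ ∈ X then .tt else .ff
  | .untl φ ψ => if LTL.untl φ ψ ∈ X then .wUntl (evalNu X φ) (evalNu X ψ) else .ff
  | .strongRel φ ψ => if LTL.strongRel φ ψ ∈ X then .rel (evalNu X φ) (evalNu X ψ) else .ff

open scoped Classical in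
/-- `φ[Y]_μ`. -/
noncomputable def evalMu (Y : Set (LTL Ap)) : LTL Ap → LTL Ap
  | .tt => .tt
  | .ff => .ff
  | .atom a => .atom a
  | .natom a => .natom a
  | .conj φ ψ => .conj (evalMu Y φ) (evalMu Y ψ)
  | .disj φ ψ => .disj (evalMu Y φ) (evalMu Y ψ)
  | .next φ => .next (evalMu Y φ)
  | .fut φ => .fut (evalMu Y φ)
  | .untl φ ψ => .untl (evalMu Y φ) (evalMu Y ψ)
  | .strongRel φ ψ => .strongRel (evalMu Y φ) (evalMu Y ψ)
  | .glob φ => if LTL.glob φ ∈ Y then .tt else .ff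
  | .wUntl φ ψ => if LTL.wUntl φ ψ ∈ Y then .tt else .untl (evalMu Y φ) (evalMu Y ψ)
  | .rel φ ψ => if LTL.rel φ ψ ∈ Y then .tt else .strongRel (evalMu Y φ) (evalMu Y ψ)

/-- Concatenation `u·w` of a finite word and an infinite word. -/
def wordAppend (u : List (Finset Ap)) (w : ℕ → Finset Ap) : ℕ → Finset Ap :=
  fun i => if h : i < u.length then u.get ⟨i, h⟩ else w (i - u.length)

/-- The smallest set of formulas containing `tt`, `ff` and all elements of `S`
that is closed under conjunction and disjunction. -/
inductive PosBool (S : Set (LTL Ap)) : LTL Ap → Prop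
  | tt : PosBool S .tt
  | ff : PosBool S .ff
  | base {ψ : LTL Ap} : ψ ∈ S → PosBool S ψ
  | conj {φ ψ : LTL Ap} : PosBool S φ → PosBool S ψ → PosBool S (.conj φ ψ)
  | disj {φ ψ : LTL Ap} : PosBool S φ → PosBool S ψ → PosBool S (.disj φ ψ)

/-- `Reach(φ)`: the set of `≡_P`-equivalence classes of the formulas `af(φ,u)`
over all finite words `u`. -/
def Reach (φ : LTL Ap) : Set (Set (LTL Ap)) :=
  {C | ∃ u : List (Finset Ap), C = {ψ | propEquiv ψ (af φ u)}}

/-- The fragment `μLTL`: only `tt`, `ff`, literals, `∧`, `∨`, `X`, `F`, `U`, `M`. -/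
def inMuLTL : LTL Ap → Prop
  | .tt => True
  | .ff => True
  | .atom _ => True
  | .natom _ => True
  | .conj φ ψ => inMuLTL φ ∧ inMuLTL ψ
  | .disj φ ψ => inMuLTL φ ∧ inMuLTL ψ
  | .next φ => inMuLTL φ
  | .fut φ => inMuLTL φ
  | .untl φ ψ => inMuLTL φ ∧ inMuLTL ψ
  | .strongRel φ ψ => inMuLTL φ ∧ inMuLTL ψ
  | .glob _ => False
  | .wUntl _ _ => False
  | .rel _ _ => False

/-- The fragment `νLTL`: only `tt`, `ff`, literals, `∧`, `∨`, `X`, `G`, `W`, `R`. -/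
def inNuLTL : LTL Ap → Prop
  | .tt => True
  | .ff => True
  | .atom _ => True
  | .natom _ => True
  | .conj φ ψ => inNuLTL φ ∧ inNuLTL ψ
  | .disj φ ψ => inNuLTL φ ∧ inNuLTL ψ
  | .next φ => inNuLTL φ
  | .glob φ => inNuLTL φ
  | .wUntl φ ψ => inNuLTL φ ∧ inNuLTL ψ
  | .rel φ ψ => inNuLTL φ ∧ inNuLTL ψ
  | .fut _ => False
  | .untl _ _ => False
  | .strongRel _ _ => False

section Aux
variable {Ap : Type} [DecidableEq Ap]

lemma suffix_zero (w : ℕ → Finset Ap) : suffix w 0 = w := by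
  funext k; simp [suffix]

lemma suffix_suffix (w : ℕ → Finset Ap) (i j : ℕ) :
    suffix (suffix w i) j = suffix w (i + j) := by
  funext k; simp [suffix, Nat.add_assoc]

lemma suffix_one (w : ℕ → Finset Ap) (k : ℕ) :
    suffix (suffix w 1) k = suffix w (k + 1) := by
  rw [suffix_suffix, Nat.add_comm]

lemma sat_fut_iff (w : ℕ → Finset Ap) (φ : LTL Ap) :
    Sat w (.fut φ) ↔ Sat w φ ∨ Sat (suffix w 1) (.fut φ) := by
  constructor
  · rintro ⟨k, hk⟩
    cases k with
    | zero => left; rwa [suffix_zero] at hk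
    | succ k => right; exact ⟨k, by rwa [suffix_one]⟩
  · rintro (h | ⟨k, hk⟩)
    · exact ⟨0, by rwa [suffix_zero]⟩
    · exact ⟨k + 1, by rwa [suffix_one] at hk⟩

lemma sat_glob_iff (w : ℕ → Finset Ap) (φ : LTL Ap) :
    Sat w (.glob φ) ↔ Sat w φ ∧ Sat (suffix w 1) (.glob φ) := by
  constructor
  · intro h
    refine ⟨by have := h 0; rwa [suffix_zero] at this, fun k => ?_⟩
    rw [suffix_one]; exact h (k + 1)
  · rintro ⟨h0, h1⟩ k
    cases k with
    | zero => rwa [suffix_zero]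
    | succ k => rw [← suffix_one]; exact h1 k

lemma sat_untl_iff (w : ℕ → Finset Ap) (φ ψ : LTL Ap) :
    Sat w (.untl φ ψ) ↔ Sat w ψ ∨ (Sat w φ ∧ Sat (suffix w 1) (.untl φ ψ)) := by
  constructor
  · rintro ⟨k, hψ, hφ⟩
    cases k with
    | zero => left; rwa [suffix_zero] at hψ
    | succ k =>
      right
      refine ⟨by have := hφ 0 (Nat.succ_pos _); rwa [suffix_zero] at this,
        ⟨k, by rwa [suffix_one], fun j hj => ?_⟩⟩
      rw [suffix_one]; exact hφ (j + 1) (by omega)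
  · rintro (h | ⟨h0, k, hψ, hφ⟩)
    · exact ⟨0, by rwa [suffix_zero], by omega⟩
    · refine ⟨k + 1, by rwa [suffix_one] at hψ, fun j hj => ?_⟩
      cases j with
      | zero => rwa [suffix_zero]
      | succ j => have := hφ j (by omega); rwa [suffix_one] at this

lemma sat_wUntl_iff (w : ℕ → Finset Ap) (φ ψ : LTL Ap) :
    Sat w (.wUntl φ ψ) ↔ Sat w ψ ∨ (Sat w φ ∧ Sat (suffix w 1) (.wUntl φ ψ)) := by
  constructor
  · rintro (h | ⟨k, hψ, hφ⟩)
    · right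
      refine ⟨by have := h 0; rwa [suffix_zero] at this, Or.inl fun k => ?_⟩
      rw [suffix_one]; exact h (k + 1)
    · cases k with
      | zero => left; rwa [suffix_zero] at hψ
      | succ k =>
        right
        refine ⟨by have := hφ 0 (Nat.succ_pos _); rwa [suffix_zero] at this,
          Or.inr ⟨k, by rwa [suffix_one], fun j hj => ?_⟩⟩
        rw [suffix_one]; exact hφ (j + 1) (by omega)
  · rintro (h | ⟨h0, (h1 | ⟨k, hψ, hφ⟩)⟩)
    · exact Or.inr ⟨0, by rwa [suffix_zero], by omega⟩
    · left
      intro k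
      cases k with
      | zero => rwa [suffix_zero]
      | succ k => rw [← suffix_one]; exact h1 k
    · refine Or.inr ⟨k + 1, by rwa [suffix_one] at hψ, fun j hj => ?_⟩
      cases j with
      | zero => rwa [suffix_zero]
      | succ j => have := hφ j (by omega); rwa [suffix_one] at this

lemma sat_strongRel_iff (w : ℕ → Finset Ap) (φ ψ : LTL Ap) :
    Sat w (.strongRel φ ψ) ↔ Sat w ψ ∧ (Sat w φ ∨ Sat (suffix w 1) (.strongRel φ ψ)) := by
  constructor
  · rintro ⟨k, hφ, hψ⟩
    refine ⟨by have := hψ 0 (Nat.zero_le _); rwa [suffix_zero] at this, ?_⟩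
    cases k with
    | zero => left; rwa [suffix_zero] at hφ
    | succ k =>
      right
      refine ⟨k, by rwa [suffix_one], fun j hj => ?_⟩
      rw [suffix_one]; exact hψ (j + 1) (by omega)
  · rintro ⟨h0, (h1 | ⟨k, hφ, hψ⟩)⟩
    · exact ⟨0, by rwa [suffix_zero], fun j hj => by
        interval_cases j; rwa [suffix_zero]⟩
    · refine ⟨k + 1, by rwa [suffix_one] at hφ, fun j hj => ?_⟩
      cases j with
      | zero => rwa [suffix_zero]
      | succ j => have := hψ j (by omega); rwa [suffix_one] at this

lemma sat_rel_iff (w : ℕ → Finset Ap) (φ ψ : LTL Ap) :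
    Sat w (.rel φ ψ) ↔ Sat w ψ ∧ (Sat w φ ∨ Sat (suffix w 1) (.rel φ ψ)) := by
  constructor
  · rintro (h | ⟨k, hφ, hψ⟩)
    · refine ⟨by have := h 0; rwa [suffix_zero] at this, Or.inr (Or.inl fun k => ?_)⟩
      rw [suffix_one]; exact h (k + 1)
    · refine ⟨by have := hψ 0 (Nat.zero_le _); rwa [suffix_zero] at this, ?_⟩
      cases k with
      | zero => left; rwa [suffix_zero] at hφ
      | succ k =>
        right; right
        refine ⟨k, by rwa [suffix_one], fun j hj => ?_⟩
        rw [suffix_one]; exact hψ (j + 1) (by omega)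
  · rintro ⟨h0, (h1 | (h | ⟨k, hφ, hψ⟩))⟩
    · exact Or.inr ⟨0, by rwa [suffix_zero], fun j hj => by
        interval_cases j; rwa [suffix_zero]⟩
    · left
      intro k
      cases k with
      | zero => rwa [suffix_zero]
      | succ k => rw [← suffix_one]; exact h k
    · refine Or.inr ⟨k + 1, by rwa [suffix_one] at hφ, fun j hj => ?_⟩
      cases j with
      | zero => rwa [suffix_zero]
      | succ j => have := hψ j (by omega); rwa [suffix_one] at this

lemma sat_afLetter (φ : LTL Ap) : ∀ w : ℕ → Finset Ap,
    Sat w φ ↔ Sat (suffix w 1) (afLetter φ (w 0)) := by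
  induction φ with
  | tt => intro w; simp [Sat, afLetter]
  | ff => intro w; simp [Sat, afLetter]
  | atom a => intro w; by_cases h : a ∈ w 0 <;> simp [Sat, afLetter, h]
  | natom a => intro w; by_cases h : a ∈ w 0 <;> simp [Sat, afLetter, h]
  | conj φ ψ ih1 ih2 => intro w; simp [Sat, afLetter, ih1 w, ih2 w]
  | disj φ ψ ih1 ih2 => intro w; simp [Sat, afLetter, ih1 w, ih2 w]
  | next φ => intro w; simp [Sat, afLetter]
  | fut φ ih => intro w; rw [sat_fut_iff]; simp [Sat, afLetter, ih w]
  | glob φ ih => intro w; rw [sat_glob_iff]; simp [Sat, afLetter, ih w]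
  | untl φ ψ ih1 ih2 => intro w; rw [sat_untl_iff]; simp [Sat, afLetter, ih1 w, ih2 w]
  | wUntl φ ψ ih1 ih2 => intro w; rw [sat_wUntl_iff]; simp [Sat, afLetter, ih1 w, ih2 w]
  | strongRel φ ψ ih1 ih2 => intro w; rw [sat_strongRel_iff]; simp [Sat, afLetter, ih1 w, ih2 w]
  | rel φ ψ ih1 ih2 => intro w; rw [sat_rel_iff]; simp [Sat, afLetter, ih1 w, ih2 w]

lemma prefixWord_succ_left (w : ℕ → Finset Ap) (i : ℕ) :
    prefixWord w (i + 1) = w 0 :: prefixWord (suffix w 1) i := by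
  simp only [prefixWord, List.range_succ_eq_map, List.map_cons, List.map_map]
  refine congrArg _ (List.map_congr_left fun k _ => ?_)
  simp [suffix, Function.comp, Nat.add_comm]

lemma prefixWord_succ (w : ℕ → Finset Ap) (i : ℕ) :
    prefixWord w (i + 1) = prefixWord w i ++ [w i] := by
  simp [prefixWord, List.range_succ]

lemma af_append (φ : LTL Ap) (u : List (Finset Ap)) (a : Finset Ap) :
    af φ (u ++ [a]) = afLetter (af φ u) a := by
  induction u generalizing φ with
  | nil => rfl
  | cons b u ih => simpa [af] using ih (afLetter φ b)

lemma sat_af (φ : LTL Ap) (w : ℕ → Finset Ap) (i : ℕ) :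
    Sat w φ ↔ Sat (suffix w i) (af φ (prefixWord w i)) := by
  induction i generalizing φ w with
  | zero => simp [prefixWord, af, suffix_zero]
  | succ i ih =>
    rw [sat_afLetter φ w, prefixWord_succ_left]
    show _ ↔ Sat (suffix w (i + 1)) (af (afLetter φ (w 0)) (prefixWord (suffix w 1) i))
    rw [ih (afLetter φ (w 0)) (suffix w 1), suffix_suffix, Nat.add_comm]

end Aux

section Aux2
set_option linter.unusedSectionVars false
variable {Ap : Type} [DecidableEq Ap]

lemma mem_subf_self (φ : LTL Ap) : φ ∈ subf φ := by
  cases φ <;> simp [subf]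

lemma subf_trans (φ : LTL Ap) : ∀ ψ ∈ subf φ, subf ψ ⊆ subf φ := by
  induction φ with
  | tt => intro ψ h; simp only [subf, Set.mem_singleton_iff] at h; subst h; exact subset_rfl
  | ff => intro ψ h; simp only [subf, Set.mem_singleton_iff] at h; subst h; exact subset_rfl
  | atom a => intro ψ h; simp only [subf, Set.mem_singleton_iff] at h; subst h; exact subset_rfl
  | natom a => intro ψ h; simp only [subf, Set.mem_singleton_iff] at h; subst h; exact subset_rfl
  | next φ ih =>
    intro ψ h
    rcases Set.mem_insert_iff.mp h with rfl | h
    · exact subset_rfl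
    · exact (ih ψ h).trans (Set.subset_insert _ _)
  | fut φ ih =>
    intro ψ h
    rcases Set.mem_insert_iff.mp h with rfl | h
    · exact subset_rfl
    · exact (ih ψ h).trans (Set.subset_insert _ _)
  | glob φ ih =>
    intro ψ h
    rcases Set.mem_insert_iff.mp h with rfl | h
    · exact subset_rfl
    · exact (ih ψ h).trans (Set.subset_insert _ _)
  | conj φ1 φ2 ih1 ih2 =>
    intro ψ h
    rcases Set.mem_insert_iff.mp h with rfl | h
    · exact subset_rfl
    · rcases h with h | h
      · exact (ih1 ψ h).trans (Set.subset_union_left.trans (Set.subset_insert _ _))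
      · exact (ih2 ψ h).trans (Set.subset_union_right.trans (Set.subset_insert _ _))
  | disj φ1 φ2 ih1 ih2 =>
    intro ψ h
    rcases Set.mem_insert_iff.mp h with rfl | h
    · exact subset_rfl
    · rcases h with h | h
      · exact (ih1 ψ h).trans (Set.subset_union_left.trans (Set.subset_insert _ _))
      · exact (ih2 ψ h).trans (Set.subset_union_right.trans (Set.subset_insert _ _))
  | untl φ1 φ2 ih1 ih2 =>
    intro ψ h
    rcases Set.mem_insert_iff.mp h with rfl | h
    · exact subset_rfl
    · rcases h with h | h
      · exact (ih1 ψ h).trans (Set.subset_union_left.trans (Set.subset_insert _ _))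
      · exact (ih2 ψ h).trans (Set.subset_union_right.trans (Set.subset_insert _ _))
  | wUntl φ1 φ2 ih1 ih2 =>
    intro ψ h
    rcases Set.mem_insert_iff.mp h with rfl | h
    · exact subset_rfl
    · rcases h with h | h
      · exact (ih1 ψ h).trans (Set.subset_union_left.trans (Set.subset_insert _ _))
      · exact (ih2 ψ h).trans (Set.subset_union_right.trans (Set.subset_insert _ _))
  | strongRel φ1 φ2 ih1 ih2 =>
    intro ψ h
    rcases Set.mem_insert_iff.mp h with rfl | h
    · exact subset_rfl
    · rcases h with h | h
      · exact (ih1 ψ h).trans (Set.subset_union_left.trans (Set.subset_insert _ _))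
      · exact (ih2 ψ h).trans (Set.subset_union_right.trans (Set.subset_insert _ _))
  | rel φ1 φ2 ih1 ih2 =>
    intro ψ h
    rcases Set.mem_insert_iff.mp h with rfl | h
    · exact subset_rfl
    · rcases h with h | h
      · exact (ih1 ψ h).trans (Set.subset_union_left.trans (Set.subset_insert _ _))
      · exact (ih2 ψ h).trans (Set.subset_union_right.trans (Set.subset_insert _ _))

lemma subf_finite (φ : LTL Ap) : (subf φ).Finite := by
  induction φ <;> simp only [subf] <;>
    first
      | exact Set.finite_singleton _
      | exact Set.Finite.insert _ (by assumption)
      | exact Set.Finite.insert _ (Set.Finite.union (by assumption) (by assumption))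

lemma subf_conj_left (φ ψ : LTL Ap) : subf φ ⊆ subf (.conj φ ψ) :=
  subf_trans _ φ (by simp [subf, mem_subf_self])
lemma subf_conj_right (φ ψ : LTL Ap) : subf ψ ⊆ subf (.conj φ ψ) :=
  subf_trans _ ψ (by simp [subf, mem_subf_self])
lemma subf_disj_left (φ ψ : LTL Ap) : subf φ ⊆ subf (.disj φ ψ) :=
  subf_trans _ φ (by simp [subf, mem_subf_self])
lemma subf_disj_right (φ ψ : LTL Ap) : subf ψ ⊆ subf (.disj φ ψ) :=
  subf_trans _ ψ (by simp [subf, mem_subf_self])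
lemma subf_next (φ : LTL Ap) : subf φ ⊆ subf (.next φ) :=
  subf_trans _ φ (by simp [subf, mem_subf_self])
lemma subf_fut (φ : LTL Ap) : subf φ ⊆ subf (.fut φ) :=
  subf_trans _ φ (by simp [subf, mem_subf_self])
lemma subf_glob (φ : LTL Ap) : subf φ ⊆ subf (.glob φ) :=
  subf_trans _ φ (by simp [subf, mem_subf_self])
lemma subf_untl_left (φ ψ : LTL Ap) : subf φ ⊆ subf (.untl φ ψ) :=
  subf_trans _ φ (by simp [subf, mem_subf_self])
lemma subf_untl_right (φ ψ : LTL Ap) : subf ψ ⊆ subf (.untl φ ψ) :=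
  subf_trans _ ψ (by simp [subf, mem_subf_self])
lemma subf_wUntl_left (φ ψ : LTL Ap) : subf φ ⊆ subf (.wUntl φ ψ) :=
  subf_trans _ φ (by simp [subf, mem_subf_self])
lemma subf_wUntl_right (φ ψ : LTL Ap) : subf ψ ⊆ subf (.wUntl φ ψ) :=
  subf_trans _ ψ (by simp [subf, mem_subf_self])
lemma subf_strongRel_left (φ ψ : LTL Ap) : subf φ ⊆ subf (.strongRel φ ψ) :=
  subf_trans _ φ (by simp [subf, mem_subf_self])
lemma subf_strongRel_right (φ ψ : LTL Ap) : subf ψ ⊆ subf (.strongRel φ ψ) :=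
  subf_trans _ ψ (by simp [subf, mem_subf_self])
lemma subf_rel_left (φ ψ : LTL Ap) : subf φ ⊆ subf (.rel φ ψ) :=
  subf_trans _ φ (by simp [subf, mem_subf_self])
lemma subf_rel_right (φ ψ : LTL Ap) : subf ψ ⊆ subf (.rel φ ψ) :=
  subf_trans _ ψ (by simp [subf, mem_subf_self])

end Aux2

section Aux3
set_option linter.unusedSectionVars false
variable {Ap : Type} [DecidableEq Ap]

lemma isMu_isProper {ψ : LTL Ap} (h : isMu ψ) : isProper ψ := by
  cases ψ <;> simp_all [isMu, isProper]

lemma proper_subf_afLetter (χ : LTL Ap) (a : Finset Ap) :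
    ∀ ψ ∈ subf (afLetter χ a), isProper ψ → ψ ∈ subf χ ∨ ψ = .tt ∨ ψ = .ff := by
  induction χ with
  | tt =>
    intro ψ h _
    simp only [afLetter, subf, Set.mem_singleton_iff] at h
    exact Or.inr (Or.inl h)
  | ff =>
    intro ψ h _
    simp only [afLetter, subf, Set.mem_singleton_iff] at h
    exact Or.inr (Or.inr h)
  | atom b =>
    intro ψ h _
    simp only [afLetter] at h
    split_ifs at h <;> simp only [subf, Set.mem_singleton_iff] at h
    · exact Or.inr (Or.inl h)
    · exact Or.inr (Or.inr h)
  | natom b =>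
    intro ψ h _
    simp only [afLetter] at h
    split_ifs at h <;> simp only [subf, Set.mem_singleton_iff] at h
    · exact Or.inr (Or.inr h)
    · exact Or.inr (Or.inl h)
  | conj φ1 φ2 ih1 ih2 =>
    intro ψ h hp
    simp only [afLetter, subf, Set.mem_insert_iff, Set.mem_union] at h
    rcases h with rfl | h | h
    · simp [isProper] at hp
    · rcases ih1 ψ h hp with h' | h'
      · exact Or.inl (subf_conj_left _ _ h')
      · exact Or.inr h'
    · rcases ih2 ψ h hp with h' | h'
      · exact Or.inl (subf_conj_right _ _ h')
      · exact Or.inr h'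
  | disj φ1 φ2 ih1 ih2 =>
    intro ψ h hp
    simp only [afLetter, subf, Set.mem_insert_iff, Set.mem_union] at h
    rcases h with rfl | h | h
    · simp [isProper] at hp
    · rcases ih1 ψ h hp with h' | h'
      · exact Or.inl (subf_disj_left _ _ h')
      · exact Or.inr h'
    · rcases ih2 ψ h hp with h' | h'
      · exact Or.inl (subf_disj_right _ _ h')
      · exact Or.inr h'
  | next φ ih =>
    intro ψ h _
    simp only [afLetter] at h
    exact Or.inl (subf_next _ h)
  | fut φ ih =>
    intro ψ h hp
    simp only [afLetter, subf, Set.mem_insert_iff, Set.mem_union] at h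
    rcases h with rfl | h | h
    · simp [isProper] at hp
    · rcases ih ψ h hp with h' | h'
      · exact Or.inl (subf_fut _ h')
      · exact Or.inr h'
    · exact Or.inl h
  | glob φ ih =>
    intro ψ h hp
    simp only [afLetter, subf, Set.mem_insert_iff, Set.mem_union] at h
    rcases h with rfl | h | h
    · simp [isProper] at hp
    · rcases ih ψ h hp with h' | h'
      · exact Or.inl (subf_glob _ h')
      · exact Or.inr h'
    · exact Or.inl h
  | untl φ1 φ2 ih1 ih2 =>
    intro ψ h hp
    simp only [afLetter, subf, Set.mem_insert_iff, Set.mem_union] at h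
    rcases h with rfl | h | rfl | h | h
    · simp [isProper] at hp
    · rcases ih2 ψ h hp with h' | h'
      · exact Or.inl (subf_untl_right _ _ h')
      · exact Or.inr h'
    · simp [isProper] at hp
    · rcases ih1 ψ h hp with h' | h'
      · exact Or.inl (subf_untl_left _ _ h')
      · exact Or.inr h'
    · exact Or.inl h
  | wUntl φ1 φ2 ih1 ih2 =>
    intro ψ h hp
    simp only [afLetter, subf, Set.mem_insert_iff, Set.mem_union] at h
    rcases h with rfl | h | rfl | h | h
    · simp [isProper] at hp
    · rcases ih2 ψ h hp with h' | h'
      · exact Or.inl (subf_wUntl_right _ _ h')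
      · exact Or.inr h'
    · simp [isProper] at hp
    · rcases ih1 ψ h hp with h' | h'
      · exact Or.inl (subf_wUntl_left _ _ h')
      · exact Or.inr h'
    · exact Or.inl h
  | strongRel φ1 φ2 ih1 ih2 =>
    intro ψ h hp
    simp only [afLetter, subf, Set.mem_insert_iff, Set.mem_union] at h
    rcases h with rfl | h | rfl | h | h
    · simp [isProper] at hp
    · rcases ih2 ψ h hp with h' | h'
      · exact Or.inl (subf_strongRel_right _ _ h')
      · exact Or.inr h'
    · simp [isProper] at hp
    · rcases ih1 ψ h hp with h' | h'
      · exact Or.inl (subf_strongRel_left _ _ h')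
      · exact Or.inr h'
    · exact Or.inl h
  | rel φ1 φ2 ih1 ih2 =>
    intro ψ h hp
    simp only [afLetter, subf, Set.mem_insert_iff, Set.mem_union] at h
    rcases h with rfl | h | rfl | h | h
    · simp [isProper] at hp
    · rcases ih2 ψ h hp with h' | h'
      · exact Or.inl (subf_rel_right _ _ h')
      · exact Or.inr h'
    · simp [isProper] at hp
    · rcases ih1 ψ h hp with h' | h'
      · exact Or.inl (subf_rel_left _ _ h')
      · exact Or.inr h'
    · exact Or.inl h

lemma proper_subf_af (u : List (Finset Ap)) :
    ∀ φ : LTL Ap, ∀ ψ ∈ subf (af φ u), isProper ψ → ψ ∈ subf φ ∨ ψ = .tt ∨ ψ = .ff := by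
  induction u with
  | nil => intro φ ψ h _; exact Or.inl h
  | cons a u ih =>
    intro φ ψ h hp
    rcases ih (afLetter φ a) ψ h hp with h' | h'
    · exact proper_subf_afLetter φ a ψ h' hp
    · exact Or.inr h'

end Aux3

section Aux4
set_option linter.unusedSectionVars false
variable {Ap : Type} [DecidableEq Ap]

lemma sat_fut_of_suffix {w : ℕ → Finset Ap} {k : ℕ} {ψ : LTL Ap}
    (h : Sat (suffix w k) (.fut ψ)) : Sat w (.fut ψ) := by
  obtain ⟨m, hm⟩ := h
  rw [suffix_suffix] at hm
  exact ⟨k + m, hm⟩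

lemma sat_fut_self {w : ℕ → Finset Ap} {ψ : LTL Ap} (h : Sat w ψ) : Sat w (.fut ψ) :=
  ⟨0, by rwa [suffix_zero]⟩

lemma nuForward (X : Set (LTL Ap)) :
    ∀ χ : LTL Ap, ∀ w : ℕ → Finset Ap,
      (∀ ψ, isMu ψ → ψ ∈ subf χ → Sat w (.fut ψ) → ψ ∈ X) →
      Sat w χ → Sat w (evalNu X χ) := by
  intro χ
  induction χ with
  | tt => intro w _ h; exact h
  | ff => intro w _ h; exact h
  | atom a => intro w _ h; exact h
  | natom a => intro w _ h; exact h
  | conj φ1 φ2 ih1 ih2 =>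
    rintro w H ⟨h1, h2⟩
    exact ⟨ih1 w (fun ψ hμ hs => H ψ hμ (subf_conj_left _ _ hs)) h1,
           ih2 w (fun ψ hμ hs => H ψ hμ (subf_conj_right _ _ hs)) h2⟩
  | disj φ1 φ2 ih1 ih2 =>
    rintro w H (h | h)
    · exact Or.inl (ih1 w (fun ψ hμ hs => H ψ hμ (subf_disj_left _ _ hs)) h)
    · exact Or.inr (ih2 w (fun ψ hμ hs => H ψ hμ (subf_disj_right _ _ hs)) h)
  | next φ ih =>
    intro w H h
    exact ih (suffix w 1)
      (fun ψ hμ hs hf => H ψ hμ (subf_next _ hs) (sat_fut_of_suffix hf)) h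
  | fut φ ih =>
    intro w H h
    have hX : LTL.fut φ ∈ X :=
      H _ trivial (mem_subf_self _) (sat_fut_self h)
    simp only [evalNu, if_pos hX]
    exact trivial
  | glob φ ih =>
    intro w H h
    intro k
    exact ih (suffix w k)
      (fun ψ hμ hs hf => H ψ hμ (subf_glob _ hs) (sat_fut_of_suffix hf)) (h k)
  | untl φ1 φ2 ih1 ih2 =>
    rintro w H ⟨k, h2, h1⟩
    have hX : LTL.untl φ1 φ2 ∈ X :=
      H _ trivial (mem_subf_self _) (sat_fut_self ⟨k, h2, h1⟩)
    simp only [evalNu, if_pos hX]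
    refine Or.inr ⟨k, ih2 (suffix w k)
      (fun ψ hμ hs hf => H ψ hμ (subf_untl_right _ _ hs) (sat_fut_of_suffix hf)) h2,
      fun j hj => ih1 (suffix w j)
        (fun ψ hμ hs hf => H ψ hμ (subf_untl_left _ _ hs) (sat_fut_of_suffix hf)) (h1 j hj)⟩
  | wUntl φ1 φ2 ih1 ih2 =>
    rintro w H (h | ⟨k, h2, h1⟩)
    · exact Or.inl fun k => ih1 (suffix w k)
        (fun ψ hμ hs hf => H ψ hμ (subf_wUntl_left _ _ hs) (sat_fut_of_suffix hf)) (h k)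
    · refine Or.inr ⟨k, ih2 (suffix w k)
        (fun ψ hμ hs hf => H ψ hμ (subf_wUntl_right _ _ hs) (sat_fut_of_suffix hf)) h2,
        fun j hj => ih1 (suffix w j)
          (fun ψ hμ hs hf => H ψ hμ (subf_wUntl_left _ _ hs) (sat_fut_of_suffix hf)) (h1 j hj)⟩
  | strongRel φ1 φ2 ih1 ih2 =>
    rintro w H ⟨k, h1, h2⟩
    have hX : LTL.strongRel φ1 φ2 ∈ X :=
      H _ trivial (mem_subf_self _) (sat_fut_self ⟨k, h1, h2⟩)
    simp only [evalNu, if_pos hX]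
    refine Or.inr ⟨k, ih1 (suffix w k)
      (fun ψ hμ hs hf => H ψ hμ (subf_strongRel_left _ _ hs) (sat_fut_of_suffix hf)) h1,
      fun j hj => ih2 (suffix w j)
        (fun ψ hμ hs hf => H ψ hμ (subf_strongRel_right _ _ hs) (sat_fut_of_suffix hf)) (h2 j hj)⟩
  | rel φ1 φ2 ih1 ih2 =>
    rintro w H (h | ⟨k, h1, h2⟩)
    · exact Or.inl fun k => ih2 (suffix w k)
        (fun ψ hμ hs hf => H ψ hμ (subf_rel_right _ _ hs) (sat_fut_of_suffix hf)) (h k)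
    · refine Or.inr ⟨k, ih1 (suffix w k)
        (fun ψ hμ hs hf => H ψ hμ (subf_rel_left _ _ hs) (sat_fut_of_suffix hf)) h1,
        fun j hj => ih2 (suffix w j)
          (fun ψ hμ hs hf => H ψ hμ (subf_rel_right _ _ hs) (sat_fut_of_suffix hf)) (h2 j hj)⟩

lemma muForward (Y : Set (LTL Ap)) :
    ∀ ξ : LTL Ap, ∀ w : ℕ → Finset Ap,
      (∀ χ, isNu χ → χ ∈ subf ξ → ∀ k, Sat (suffix w k) (.glob χ) → χ ∈ Y) →
      Sat w ξ → Sat w (evalMu Y ξ) := by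
  intro ξ
  induction ξ with
  | tt => intro w _ h; exact h
  | ff => intro w _ h; exact h
  | atom a => intro w _ h; exact h
  | natom a => intro w _ h; exact h
  | conj φ1 φ2 ih1 ih2 =>
    rintro w H ⟨h1, h2⟩
    exact ⟨ih1 w (fun χ hν hs => H χ hν (subf_conj_left _ _ hs)) h1,
           ih2 w (fun χ hν hs => H χ hν (subf_conj_right _ _ hs)) h2⟩
  | disj φ1 φ2 ih1 ih2 =>
    rintro w H (h | h)
    · exact Or.inl (ih1 w (fun χ hν hs => H χ hν (subf_disj_left _ _ hs)) h)
    · exact Or.inr (ih2 w (fun χ hν hs => H χ hν (subf_disj_right _ _ hs)) h)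
  | next φ ih =>
    intro w H h
    exact ih (suffix w 1)
      (fun χ hν hs k hg => H χ hν (subf_next _ hs) (1 + k) (by rwa [suffix_suffix] at hg)) h
  | fut φ ih =>
    rintro w H ⟨k, hk⟩
    exact ⟨k, ih (suffix w k)
      (fun χ hν hs j hg => H χ hν (subf_fut _ hs) (k + j) (by rwa [suffix_suffix] at hg)) hk⟩
  | glob φ ih =>
    intro w H h
    have hY : LTL.glob φ ∈ Y := by
      refine H _ trivial (mem_subf_self _) 0 (fun k j => ?_)
      rw [suffix_zero, suffix_suffix]
      exact h (k + j)
    simp only [evalMu, if_pos hY]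
    exact trivial
  | untl φ1 φ2 ih1 ih2 =>
    rintro w H ⟨k, h2, h1⟩
    refine ⟨k, ih2 (suffix w k)
      (fun χ hν hs j hg => H χ hν (subf_untl_right _ _ hs) (k + j) (by rwa [suffix_suffix] at hg)) h2,
      fun j hj => ih1 (suffix w j)
        (fun χ hν hs m hg => H χ hν (subf_untl_left _ _ hs) (j + m) (by rwa [suffix_suffix] at hg)) (h1 j hj)⟩
  | wUntl φ1 φ2 ih1 ih2 =>
    rintro w H (h | ⟨k, h2, h1⟩)
    · have hY : LTL.wUntl φ1 φ2 ∈ Y := by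
        refine H _ trivial (mem_subf_self _) 0 (fun k => Or.inl (fun j => ?_))
        rw [suffix_suffix, suffix_zero]
        exact h (k + j)
      simp only [evalMu, if_pos hY]
      exact trivial
    · by_cases hY : LTL.wUntl φ1 φ2 ∈ Y
      · simp only [evalMu, if_pos hY]; exact trivial
      · simp only [evalMu, if_neg hY]
        refine ⟨k, ih2 (suffix w k)
          (fun χ hν hs j hg => H χ hν (subf_wUntl_right _ _ hs) (k + j) (by rwa [suffix_suffix] at hg)) h2,
          fun j hj => ih1 (suffix w j)
            (fun χ hν hs m hg => H χ hν (subf_wUntl_left _ _ hs) (j + m) (by rwa [suffix_suffix] at hg)) (h1 j hj)⟩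
  | strongRel φ1 φ2 ih1 ih2 =>
    rintro w H ⟨k, h1, h2⟩
    refine ⟨k, ih1 (suffix w k)
      (fun χ hν hs j hg => H χ hν (subf_strongRel_left _ _ hs) (k + j) (by rwa [suffix_suffix] at hg)) h1,
      fun j hj => ih2 (suffix w j)
        (fun χ hν hs m hg => H χ hν (subf_strongRel_right _ _ hs) (j + m) (by rwa [suffix_suffix] at hg)) (h2 j hj)⟩
  | rel φ1 φ2 ih1 ih2 =>
    rintro w H (h | ⟨k, h1, h2⟩)
    · have hY : LTL.rel φ1 φ2 ∈ Y := by
        refine H _ trivial (mem_subf_self _) 0 (fun k => Or.inl (fun j => ?_))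
        rw [suffix_suffix, suffix_zero]
        exact h (k + j)
      simp only [evalMu, if_pos hY]
      exact trivial
    · by_cases hY : LTL.rel φ1 φ2 ∈ Y
      · simp only [evalMu, if_pos hY]; exact trivial
      · simp only [evalMu, if_neg hY]
        refine ⟨k, ih1 (suffix w k)
          (fun χ hν hs j hg => H χ hν (subf_rel_left _ _ hs) (k + j) (by rwa [suffix_suffix] at hg)) h1,
          fun j hj => ih2 (suffix w j)
            (fun χ hν hs m hg => H χ hν (subf_rel_right _ _ hs) (j + m) (by rwa [suffix_suffix] at hg)) (h2 j hj)⟩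

end Aux4

section Aux5
set_option linter.unusedSectionVars false
variable {Ap : Type} [DecidableEq Ap]

lemma sat_glob_suffix {w : ℕ → Finset Ap} {θ : LTL Ap}
    (h : Sat w (.glob θ)) (k : ℕ) : Sat (suffix w k) (.glob θ) :=
  fun j => by rw [suffix_suffix]; exact h (k + j)

/-- Size of a formula. -/
def fsize : LTL Ap → ℕ
  | .tt => 1
  | .ff => 1
  | .atom _ => 1
  | .natom _ => 1
  | .conj φ ψ => fsize φ + fsize ψ + 1
  | .disj φ ψ => fsize φ + fsize ψ + 1
  | .next φ => fsize φ + 1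
  | .fut φ => fsize φ + 1
  | .glob φ => fsize φ + 1
  | .untl φ ψ => fsize φ + fsize ψ + 1
  | .wUntl φ ψ => fsize φ + fsize ψ + 1
  | .strongRel φ ψ => fsize φ + fsize ψ + 1
  | .rel φ ψ => fsize φ + fsize ψ + 1

lemma backMain (X Y : Set (LTL Ap)) :
    ∀ n : ℕ, ∀ ξ : LTL Ap, fsize ξ ≤ n → ∀ w : ℕ → Finset Ap,
      (∀ ψ ∈ X, Sat w (.glob (.fut (evalMu Y ψ)))) →
      (∀ χ ∈ Y, Sat w (.glob (evalNu X χ))) →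
      (Sat w (evalNu X ξ) → Sat w ξ) ∧ (Sat w (evalMu Y ξ) → Sat w ξ) := by
  intro n
  induction n with
  | zero => intro ξ h; cases ξ <;> simp [fsize] at h
  | succ n ih =>
    intro ξ hsize w HX HY
    have HXs : ∀ k : ℕ, ∀ ψ ∈ X, Sat (suffix w k) (.glob (.fut (evalMu Y ψ))) :=
      fun k ψ hψ => sat_glob_suffix (HX ψ hψ) k
    have HYs : ∀ k : ℕ, ∀ χ ∈ Y, Sat (suffix w k) (.glob (evalNu X χ)) :=
      fun k χ hχ => sat_glob_suffix (HY χ hχ) k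
    cases ξ with
    | tt => exact ⟨id, id⟩
    | ff => exact ⟨id, id⟩
    | atom a => exact ⟨id, id⟩
    | natom a => exact ⟨id, id⟩
    | conj φ1 φ2 =>
      have hs : fsize φ1 ≤ n ∧ fsize φ2 ≤ n := by simp [fsize] at hsize; omega
      have I1 := ih φ1 hs.1 w HX HY
      have I2 := ih φ2 hs.2 w HX HY
      exact ⟨fun h => ⟨I1.1 h.1, I2.1 h.2⟩, fun h => ⟨I1.2 h.1, I2.2 h.2⟩⟩
    | disj φ1 φ2 =>
      have hs : fsize φ1 ≤ n ∧ fsize φ2 ≤ n := by simp [fsize] at hsize; omega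
      have I1 := ih φ1 hs.1 w HX HY
      have I2 := ih φ2 hs.2 w HX HY
      exact ⟨fun h => h.imp I1.1 I2.1, fun h => h.imp I1.2 I2.2⟩
    | next φ =>
      have hs : fsize φ ≤ n := by simp [fsize] at hsize; omega
      have I := ih φ hs (suffix w 1) (HXs 1) (HYs 1)
      exact ⟨fun h => I.1 h, fun h => I.2 h⟩
    | glob φ =>
      have hs : fsize φ ≤ n := by simp [fsize] at hsize; omega
      constructor
      · intro h k
        exact (ih φ hs (suffix w k) (HXs k) (HYs k)).1 (h k)
      · by_cases hY : LTL.glob φ ∈ Y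
        · intro _ k
          have h0 : Sat (suffix (suffix w k) 0) (evalNu X φ) := (HY _ hY) k 0
          rw [suffix_zero] at h0
          exact (ih φ hs (suffix w k) (HXs k) (HYs k)).1 h0
        · simp only [evalMu, if_neg hY]
          exact fun h => h.elim
    | fut φ =>
      have hs : fsize φ ≤ n := by simp [fsize] at hsize; omega
      constructor
      · by_cases hX : LTL.fut φ ∈ X
        · intro _
          have h0 := (HX _ hX) 0
          rw [suffix_zero] at h0
          simp only [evalMu] at h0
          obtain ⟨m, hm⟩ := h0
          obtain ⟨m', hm'⟩ := hm
          rw [suffix_suffix] at hm'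
          exact ⟨m + m', (ih φ hs _ (HXs _) (HYs _)).2 hm'⟩
        · simp only [evalNu, if_neg hX]
          exact fun h => h.elim
      · rintro ⟨k, hk⟩
        exact ⟨k, (ih φ hs _ (HXs k) (HYs k)).2 hk⟩
    | untl φ1 φ2 =>
      have hs : fsize φ1 ≤ n ∧ fsize φ2 ≤ n := by simp [fsize] at hsize; omega
      constructor
      · by_cases hX : LTL.untl φ1 φ2 ∈ X
        · simp only [evalNu, if_pos hX]
          rintro (hG | ⟨k, h2, h1⟩)
          · have hφ1 : ∀ k, Sat (suffix w k) φ1 :=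
              fun k => (ih φ1 hs.1 _ (HXs k) (HYs k)).1 (hG k)
            have h0 := (HX _ hX) 0
            rw [suffix_zero] at h0
            simp only [evalMu] at h0
            obtain ⟨m, hm⟩ := h0
            obtain ⟨k', h2', _⟩ := hm
            rw [suffix_suffix] at h2'
            exact ⟨m + k', (ih φ2 hs.2 _ (HXs _) (HYs _)).2 h2', fun j _ => hφ1 j⟩
          · exact ⟨k, (ih φ2 hs.2 _ (HXs k) (HYs k)).1 h2,
              fun j hj => (ih φ1 hs.1 _ (HXs j) (HYs j)).1 (h1 j hj)⟩
        · simp only [evalNu, if_neg hX]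
          exact fun h => h.elim
      · rintro ⟨k, h2, h1⟩
        exact ⟨k, (ih φ2 hs.2 _ (HXs k) (HYs k)).2 h2,
          fun j hj => (ih φ1 hs.1 _ (HXs j) (HYs j)).2 (h1 j hj)⟩
    | wUntl φ1 φ2 =>
      have hs : fsize φ1 ≤ n ∧ fsize φ2 ≤ n := by simp [fsize] at hsize; omega
      constructor
      · rintro (hG | ⟨k, h2, h1⟩)
        · exact Or.inl fun k => (ih φ1 hs.1 _ (HXs k) (HYs k)).1 (hG k)
        · exact Or.inr ⟨k, (ih φ2 hs.2 _ (HXs k) (HYs k)).1 h2,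
            fun j hj => (ih φ1 hs.1 _ (HXs j) (HYs j)).1 (h1 j hj)⟩
      · by_cases hY : LTL.wUntl φ1 φ2 ∈ Y
        · intro _
          have h0 := (HY _ hY) 0
          rw [suffix_zero] at h0
          simp only [evalNu] at h0
          rcases h0 with hG | ⟨k, h2, h1⟩
          · exact Or.inl fun k => (ih φ1 hs.1 _ (HXs k) (HYs k)).1 (hG k)
          · exact Or.inr ⟨k, (ih φ2 hs.2 _ (HXs k) (HYs k)).1 h2,
              fun j hj => (ih φ1 hs.1 _ (HXs j) (HYs j)).1 (h1 j hj)⟩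
        · simp only [evalMu, if_neg hY]
          rintro ⟨k, h2, h1⟩
          exact Or.inr ⟨k, (ih φ2 hs.2 _ (HXs k) (HYs k)).2 h2,
            fun j hj => (ih φ1 hs.1 _ (HXs j) (HYs j)).2 (h1 j hj)⟩
    | strongRel φ1 φ2 =>
      have hs : fsize φ1 ≤ n ∧ fsize φ2 ≤ n := by simp [fsize] at hsize; omega
      constructor
      · by_cases hX : LTL.strongRel φ1 φ2 ∈ X
        · simp only [evalNu, if_pos hX]
          rintro (hG | ⟨k, h1, h2⟩)
          · have hφ2 : ∀ k, Sat (suffix w k) φ2 :=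
              fun k => (ih φ2 hs.2 _ (HXs k) (HYs k)).1 (hG k)
            have h0 := (HX _ hX) 0
            rw [suffix_zero] at h0
            simp only [evalMu] at h0
            obtain ⟨m, hm⟩ := h0
            obtain ⟨k', h1', _⟩ := hm
            rw [suffix_suffix] at h1'
            exact ⟨m + k', (ih φ1 hs.1 _ (HXs _) (HYs _)).2 h1', fun j _ => hφ2 j⟩
          · exact ⟨k, (ih φ1 hs.1 _ (HXs k) (HYs k)).1 h1,
              fun j hj => (ih φ2 hs.2 _ (HXs j) (HYs j)).1 (h2 j hj)⟩
        · simp only [evalNu, if_neg hX]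
          exact fun h => h.elim
      · rintro ⟨k, h1, h2⟩
        exact ⟨k, (ih φ1 hs.1 _ (HXs k) (HYs k)).2 h1,
          fun j hj => (ih φ2 hs.2 _ (HXs j) (HYs j)).2 (h2 j hj)⟩
    | rel φ1 φ2 =>
      have hs : fsize φ1 ≤ n ∧ fsize φ2 ≤ n := by simp [fsize] at hsize; omega
      constructor
      · rintro (hG | ⟨k, h1, h2⟩)
        · exact Or.inl fun k => (ih φ2 hs.2 _ (HXs k) (HYs k)).1 (hG k)
        · exact Or.inr ⟨k, (ih φ1 hs.1 _ (HXs k) (HYs k)).1 h1,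
            fun j hj => (ih φ2 hs.2 _ (HXs j) (HYs j)).1 (h2 j hj)⟩
      · by_cases hY : LTL.rel φ1 φ2 ∈ Y
        · intro _
          have h0 := (HY _ hY) 0
          rw [suffix_zero] at h0
          simp only [evalNu] at h0
          rcases h0 with hG | ⟨k, h1, h2⟩
          · exact Or.inl fun k => (ih φ2 hs.2 _ (HXs k) (HYs k)).1 (hG k)
          · exact Or.inr ⟨k, (ih φ1 hs.1 _ (HXs k) (HYs k)).1 h1,
              fun j hj => (ih φ2 hs.2 _ (HXs j) (HYs j)).1 (h2 j hj)⟩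
        · simp only [evalMu, if_neg hY]
          rintro ⟨k, h1, h2⟩
          exact Or.inr ⟨k, (ih φ1 hs.1 _ (HXs k) (HYs k)).2 h1,
            fun j hj => (ih φ2 hs.2 _ (HXs j) (HYs j)).2 (h2 j hj)⟩

end Aux5

section Aux6
set_option linter.unusedSectionVars false
variable {Ap : Type} [DecidableEq Ap]

lemma sat_evalNu_afLetter (X : Set (LTL Ap)) (a : Finset Ap) :
    ∀ χ : LTL Ap, ∀ v : ℕ → Finset Ap,
      Sat v (afLetter (evalNu X χ) a) → Sat v (evalNu X (afLetter χ a)) := by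
  intro χ
  induction χ with
  | tt => intro v h; exact h
  | ff => intro v h; exact h
  | atom b => intro v h; by_cases hb : b ∈ a <;> simp_all [evalNu, afLetter]
  | natom b => intro v h; by_cases hb : b ∈ a <;> simp_all [evalNu, afLetter]
  | conj φ1 φ2 ih1 ih2 =>
    intro v h
    exact ⟨ih1 v h.1, ih2 v h.2⟩
  | disj φ1 φ2 ih1 ih2 =>
    intro v h
    exact h.imp (ih1 v) (ih2 v)
  | next φ ih => intro v h; exact h
  | fut φ ih =>
    intro v h
    by_cases hX : LTL.fut φ ∈ X
    · simp only [afLetter, evalNu, if_pos hX]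
      exact Or.inr trivial
    · simp only [evalNu, if_neg hX, afLetter] at h
      exact h.elim
  | glob φ ih =>
    intro v h
    exact ⟨ih v h.1, h.2⟩
  | untl φ1 φ2 ih1 ih2 =>
    intro v h
    by_cases hX : LTL.untl φ1 φ2 ∈ X
    · simp only [evalNu, if_pos hX, afLetter] at h ⊢
      rcases h with h | ⟨hl, hr⟩
      · exact Or.inl (ih2 v h)
      · exact Or.inr ⟨ih1 v hl, hr⟩
    · simp only [evalNu, if_neg hX, afLetter] at h
      exact h.elim
  | wUntl φ1 φ2 ih1 ih2 =>
    intro v h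
    rcases h with h | ⟨hl, hr⟩
    · exact Or.inl (ih2 v h)
    · exact Or.inr ⟨ih1 v hl, hr⟩
  | strongRel φ1 φ2 ih1 ih2 =>
    intro v h
    by_cases hX : LTL.strongRel φ1 φ2 ∈ X
    · simp only [evalNu, if_pos hX, afLetter] at h ⊢
      exact ⟨ih2 v h.1, h.2.imp (ih1 v) id⟩
    · simp only [evalNu, if_neg hX, afLetter] at h
      exact h.elim
  | rel φ1 φ2 ih1 ih2 =>
    intro v h
    exact ⟨ih2 v h.1, h.2.imp (ih1 v) id⟩

lemma evalNu_af_transfer (X : Set (LTL Ap)) (φ : LTL Ap) (w : ℕ → Finset Ap) (i : ℕ)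
    (h : Sat (suffix w i) (evalNu X (af φ (prefixWord w i)))) :
    ∀ n, i ≤ n → Sat (suffix w n) (evalNu X (af φ (prefixWord w n))) := by
  intro n hn
  obtain ⟨d, rfl⟩ := Nat.exists_eq_add_of_le hn
  clear hn
  induction d with
  | zero => exact h
  | succ d ihd =>
    have hstep := (sat_afLetter (evalNu X (af φ (prefixWord w (i + d)))) (suffix w (i + d))).mp ihd
    have h2 := sat_evalNu_afLetter X ((suffix w (i + d)) 0) (af φ (prefixWord w (i + d))) _ hstep
    have hl : suffix w (i + d) 0 = w (i + d) := by simp [suffix]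
    rw [suffix_suffix, hl, ← af_append, ← prefixWord_succ] at h2
    exact h2

lemma sat_fut_mono {w : ℕ → Finset Ap} {ψ : LTL Ap} {k m : ℕ} (h : k ≤ m)
    (hf : Sat (suffix w m) (.fut ψ)) : Sat (suffix w k) (.fut ψ) := by
  obtain ⟨j, hj⟩ := hf
  rw [suffix_suffix] at hj
  refine ⟨m - k + j, ?_⟩
  rw [suffix_suffix]
  have : k + (m - k + j) = m + j := by omega
  rw [this]
  exact hj

lemma sat_glob_mono {w : ℕ → Finset Ap} {θ : LTL Ap} {k m : ℕ} (h : k ≤ m)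
    (hg : Sat (suffix w k) (.glob θ)) : Sat (suffix w m) (.glob θ) := by
  intro j
  rw [suffix_suffix]
  have := hg (m - k + j)
  rw [suffix_suffix] at this
  have e : k + (m - k + j) = m + j := by omega
  rw [e] at this
  exact this

lemma exists_stable (φ : LTL Ap) (w : ℕ → Finset Ap) :
    ∃ N, ∀ m, N ≤ m → ∀ ψ ∈ muSet φ,
      Sat (suffix w m) (.fut ψ) → Sat w (.glob (.fut ψ)) := by
  have hch : ∀ ψ : LTL Ap, ∃ k : ℕ,
      ¬ Sat w (.glob (.fut ψ)) → ¬ Sat (suffix w k) (.fut ψ) := by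
    intro ψ
    by_cases h : Sat w (.glob (.fut ψ))
    · exact ⟨0, fun hn => absurd h hn⟩
    · have : ∃ k, ¬ Sat (suffix w k) (.fut ψ) := by
        by_contra hc
        push_neg at hc
        exact h hc
      obtain ⟨k, hk⟩ := this
      exact ⟨k, fun _ => hk⟩
  choose f hf using hch
  refine ⟨(subf_finite φ).toFinset.sup f, fun m hm ψ hψ hsat => ?_⟩
  by_contra hn
  refine hf ψ hn (sat_fut_mono ?_ hsat)
  calc f ψ ≤ (subf_finite φ).toFinset.sup f :=
        Finset.le_sup ((subf_finite φ).mem_toFinset.mpr hψ.1)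
    _ ≤ m := hm

lemma exists_globAll (S : Set (LTL Ap)) (hS : S.Finite) (w : ℕ → Finset Ap)
    (g : LTL Ap → LTL Ap) (h : ∀ χ ∈ S, Sat w (.fut (.glob (g χ)))) :
    ∃ n, ∀ m, n ≤ m → ∀ χ ∈ S, Sat (suffix w m) (.glob (g χ)) := by
  have hch : ∀ χ : LTL Ap, ∃ k : ℕ, χ ∈ S → Sat (suffix w k) (.glob (g χ)) := by
    intro χ
    by_cases hχ : χ ∈ S
    · obtain ⟨k, hk⟩ := h χ hχ
      exact ⟨k, fun _ => hk⟩
    · exact ⟨0, fun hc => absurd hc hχ⟩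
  choose f hf using hch
  refine ⟨hS.toFinset.sup f, fun m hm χ hχ => sat_glob_mono ?_ (hf χ hχ)⟩
  calc f χ ≤ hS.toFinset.sup f := Finset.le_sup (hS.mem_toFinset.mpr hχ)
    _ ≤ m := hm

end Aux6

/-- Master Theorem: `w ⊨ φ` iff there exist `X ⊆ μ(φ)` and
`Y ⊆ ν(φ)` such that (1) `w_i ⊨ (af(φ, w_{0i}))[X]_ν` for some `i`,
(2) `w ⊨ GF(ψ[Y]_μ)` for every `ψ ∈ X`, and
(3) `w ⊨ FG(ψ[X]_ν)` for every `ψ ∈ Y`. -/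
theorem stmt18 {Ap : Type} [DecidableEq Ap] [Fintype Ap]
    (φ : LTL Ap) (w : ℕ → Finset Ap) :
    Sat w φ ↔
      ∃ X Y : Set (LTL Ap), X ⊆ muSet φ ∧ Y ⊆ nuSet φ ∧
        (∃ i : ℕ, Sat (suffix w i) (evalNu X (af φ (prefixWord w i)))) ∧
        (∀ ψ ∈ X, Sat w (LTL.glob (LTL.fut (evalMu Y ψ)))) ∧
        (∀ ψ ∈ Y, Sat w (LTL.fut (LTL.glob (evalNu X ψ)))) := by
  constructor
  · intro hsat
    obtain ⟨N, hN⟩ := exists_stable φ w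
    refine ⟨GFSet φ w, FGSet φ w, fun ψ hψ => hψ.1, fun χ hχ => hχ.1, ?_, ?_, ?_⟩
    · -- condition (1)
      refine ⟨N, nuForward _ _ _ ?_ ((sat_af φ w N).mp hsat)⟩
      intro ψ hμ hs hfut
      have hp : ψ ∈ subf φ := by
        rcases proper_subf_af _ φ ψ hs (isMu_isProper hμ) with h' | rfl | rfl
        · exact h'
        · exact absurd hμ (by simp [isMu])
        · exact absurd hμ (by simp [isMu])
      exact ⟨⟨hp, hμ⟩, hN N le_rfl ψ ⟨hp, hμ⟩ hfut⟩
    · -- condition (2)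
      rintro ψ ⟨hμ, hGF⟩ k
      obtain ⟨m, hm⟩ := hGF k
      rw [suffix_suffix] at hm
      refine ⟨m, ?_⟩
      rw [suffix_suffix]
      refine muForward _ _ _ ?_ hm
      intro χ hν hs j hg
      rw [suffix_suffix] at hg
      exact ⟨⟨subf_trans φ ψ hμ.1 hs, hν⟩, ⟨k + m + j, hg⟩⟩
    · -- condition (3)
      rintro χ ⟨hν, hFG⟩
      obtain ⟨n1, hn1⟩ := hFG
      refine ⟨max n1 N, fun k => ?_⟩
      rw [suffix_suffix]
      have hχk : Sat (suffix (suffix w (max n1 N + k)) 0) χ :=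
        (sat_glob_mono (show n1 ≤ max n1 N + k by omega) hn1) 0
      rw [suffix_zero] at hχk
      refine nuForward _ _ _ ?_ hχk
      intro ψ hμ hs hf
      have hp : ψ ∈ subf φ := subf_trans φ χ hν.1 hs
      exact ⟨⟨hp, hμ⟩, hN (max n1 N + k) (by omega) ψ ⟨hp, hμ⟩ hf⟩
  · rintro ⟨X, Y, hXsub, hYsub, ⟨i, h1⟩, h2, h3⟩
    have hYfin : Y.Finite := (subf_finite φ).subset (fun χ hχ => (hYsub hχ).1)
    obtain ⟨n0, hn0⟩ := exists_globAll Y hYfin w (evalNu X) h3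
    have h1' := evalNu_af_transfer X φ w i h1 (max i n0) (le_max_left _ _)
    have HX : ∀ ψ ∈ X, Sat (suffix w (max i n0)) (.glob (.fut (evalMu Y ψ))) :=
      fun ψ hψ => sat_glob_suffix (h2 ψ hψ) (max i n0)
    have HY : ∀ χ ∈ Y, Sat (suffix w (max i n0)) (.glob (evalNu X χ)) :=
      hn0 (max i n0) (le_max_right _ _)
    have hξ := (backMain X Y (fsize (af φ (prefixWord w (max i n0)))) _ le_rfl
      (suffix w (max i n0)) HX HY).1 h1'
    exact (sat_af φ w (max i n0)).mpr hξ
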